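/- Let μ = N(α, Σ) be a nondegenerate Gaussian on ℝ^d and Q, K ∈ ℝ^{d×d}. Then the L2 self-attention velocity field satisfies Γ_μ^{L2}(x) = ∫ Vy·e^{−‖Qx−Ky‖²} dμ(y) / ∫ e^{−‖Qx−Ky‖²} dμ(y) = V(Σ⁻¹ + 2KᵀK)⁻¹(Σ⁻¹α + 2KᵀQ x) for all x ∈ ℝ^d. -/

import Mathlib

/-!
Multiplying the Gaussian density of `N(α, Σ)` by the attention weight `exp (-‖Qx - Ky‖²)` and
completing the square in `y` gives, up to a factor independent of `y`, the unnormalised density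
with precision `A = Σ⁻¹ + 2KᵀK` and mean `m = A⁻¹ (Σ⁻¹α + 2KᵀQx)`. The attention field is
therefore `V` applied to the mean of this Gaussian, which is `m` because its density is invariant
under the reflection `y ↦ 2m - y`.
-/

open MeasureTheory Matrix

section NormedSpace

variable {E : Type*} [NormedAddCommGroup E] [NormedSpace ℝ E] [FiniteDimensional ℝ E]

theorem integrable_pow_norm_mul_exp_neg_mul_sq_norm [MeasurableSpace E] [BorelSpace E]
    (μ : Measure E) [μ.IsAddHaarMeasure] {c : ℝ} (hc : 0 < c) (k : ℕ) :
    Integrable (fun x : E => ‖x‖ ^ k * Real.exp (-c * ‖x‖ ^ 2)) μ := by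
  cases subsingleton_or_nontrivial E
  · exact .of_finite
  refine (integrable_fun_norm_addHaar μ (f := fun r => r ^ k * Real.exp (-c * r ^ 2))).2 ?_
  have := integrableOn_rpow_mul_exp_neg_mul_sq hc
    (s := ((Module.finrank ℝ E - 1 + k : ℕ) : ℝ)) (neg_one_lt_zero.trans_le (Nat.cast_nonneg _))
  refine this.congr_fun (fun r _ => ?_) measurableSet_Ioi
  simp only [Real.rpow_natCast, smul_eq_mul, pow_add]
  ring

theorem exists_pos_mul_sq_norm_le_of_homogeneous {q : E → ℝ} (hq : Continuous q)
    (hsmul : ∀ (t : ℝ) z, q (t • z) = t ^ 2 * q z) (hpos : ∀ z ≠ 0, 0 < q z) :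
    ∃ c > 0, ∀ z, c * ‖z‖ ^ 2 ≤ q z := by
  have hnormalize : ∀ z ≠ (0 : E), ‖z‖⁻¹ • z ∈ Metric.sphere (0 : E) 1 ∧
      q z = ‖z‖ ^ 2 * q (‖z‖⁻¹ • z) := fun z hz => by
    have hz' : ‖z‖ ≠ 0 := norm_ne_zero_iff.2 hz
    refine ⟨by simp [norm_smul, hz'], ?_⟩
    rw [hsmul, ← mul_assoc, ← mul_pow, mul_inv_cancel₀ hz', one_pow, one_mul]
  by_cases hne : (Metric.sphere (0 : E) 1).Nonempty
  · obtain ⟨z₀, hz₀, hmin⟩ := (isCompact_sphere (0 : E) 1).exists_isMinOn hne hq.continuousOn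
    refine ⟨q z₀, hpos z₀ (ne_zero_of_mem_unit_sphere ⟨z₀, hz₀⟩), fun z => ?_⟩
    rcases eq_or_ne z 0 with rfl | hz
    · simpa using (hsmul 0 0).ge
    obtain ⟨hsphere, hq_eq⟩ := hnormalize z hz
    rw [hq_eq, mul_comm]
    exact mul_le_mul_of_nonneg_left (hmin hsphere) (by positivity)
  · refine ⟨1, one_pos, fun z => ?_⟩
    obtain rfl : z = 0 := by
      by_contra hz
      exact hne ⟨_, (hnormalize z hz).1⟩
    simpa using (hsmul 0 0).ge

end NormedSpace

variable {n : Type*} [Fintype n]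

theorem Matrix.PosDef.exists_pos_mul_sq_norm_le {A : Matrix n n ℝ} (hA : A.PosDef) :
    ∃ c > 0, ∀ z : n → ℝ, c * ‖z‖ ^ 2 ≤ z ⬝ᵥ A *ᵥ z :=
  exists_pos_mul_sq_norm_le_of_homogeneous (by fun_prop)
    (fun t z => by simp only [mulVec_smul, smul_dotProduct, dotProduct_smul, smul_eq_mul]; ring)
    (fun z hz => by simpa using hA.dotProduct_mulVec_pos hz)

theorem Matrix.IsSymm.dotProduct_mulVec_comm {A : Matrix n n ℝ} (hA : A.IsSymm) (v w : n → ℝ) :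
    v ⬝ᵥ A *ᵥ w = w ⬝ᵥ A *ᵥ v := by
  rw [dotProduct_mulVec, ← mulVec_transpose, hA.eq, dotProduct_comm]

theorem Matrix.IsSymm.dotProduct_sub_mulVec_sub {A : Matrix n n ℝ} (hA : A.IsSymm)
    {m b : n → ℝ} (hm : A *ᵥ m = b) (y : n → ℝ) :
    (y - m) ⬝ᵥ A *ᵥ (y - m) = y ⬝ᵥ A *ᵥ y - 2 * (y ⬝ᵥ b) + m ⬝ᵥ b := by
  simp only [mulVec_sub, sub_dotProduct, dotProduct_sub, hm, hA.dotProduct_mulVec_comm m y]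
  ring

/-- The unnormalised density of the Gaussian with mean `m` and precision matrix `A`, i.e.
covariance `A⁻¹`. -/
noncomputable def gaussianKernel (A : Matrix n n ℝ) (m y : n → ℝ) : ℝ :=
  Real.exp (-(1 / 2) * ((y - m) ⬝ᵥ A *ᵥ (y - m)))

section gaussianKernel

variable {A : Matrix n n ℝ}

theorem gaussianKernel_pos (A : Matrix n n ℝ) (m y : n → ℝ) : 0 < gaussianKernel A m y :=
  Real.exp_pos _

theorem continuous_gaussianKernel (A : Matrix n n ℝ) (m : n → ℝ) :
    Continuous (gaussianKernel A m) := by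
  unfold gaussianKernel
  fun_prop

theorem gaussianKernel_eq_zero_sub (A : Matrix n n ℝ) (m y : n → ℝ) :
    gaussianKernel A m y = gaussianKernel A 0 (y - m) := by
  simp [gaussianKernel]

theorem gaussianKernel_two_nsmul_sub (A : Matrix n n ℝ) (m y : n → ℝ) :
    gaussianKernel A m (2 • m - y) = gaussianKernel A m y := by
  have : 2 • m - y - m = -(y - m) := by rw [two_nsmul]; abel
  simp only [gaussianKernel, this, mulVec_neg, neg_dotProduct, dotProduct_neg, neg_neg]

theorem integrable_pow_norm_mul_gaussianKernel_zero (hA : A.PosDef) (k : ℕ) :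
    Integrable (fun z => ‖z‖ ^ k * gaussianKernel A 0 z) := by
  obtain ⟨c, hc, hcoercive⟩ := hA.exists_pos_mul_sq_norm_le
  refine (integrable_pow_norm_mul_exp_neg_mul_sq_norm volume (half_pos hc) k).mono'
    (by have := continuous_gaussianKernel A 0; fun_prop) (.of_forall fun z => ?_)
  rw [norm_mul, norm_pow, norm_norm, Real.norm_of_nonneg (gaussianKernel_pos A 0 z).le]
  gcongr
  simp only [gaussianKernel, sub_zero, Real.exp_le_exp]
  linarith [hcoercive z]

theorem integrable_gaussianKernel (hA : A.PosDef) (m : n → ℝ) :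
    Integrable (gaussianKernel A m) := by
  rw [funext (gaussianKernel_eq_zero_sub A m)]
  simpa using (integrable_pow_norm_mul_gaussianKernel_zero hA 0).comp_sub_right m

theorem integrable_gaussianKernel_smul_self (hA : A.PosDef) (m : n → ℝ) :
    Integrable (fun y => gaussianKernel A m y • y) := by
  have hcentered : Integrable (fun z => gaussianKernel A 0 z • z) :=
    (integrable_pow_norm_mul_gaussianKernel_zero hA 1).mono'
      (by have := continuous_gaussianKernel A 0; fun_prop) (.of_forall fun z => by
        rw [norm_smul, Real.norm_of_nonneg (gaussianKernel_pos A 0 z).le, pow_one, mul_comm])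
  refine ((hcentered.comp_sub_right m).add ((integrable_gaussianKernel hA m).smul_const m)).congr
    (.of_forall fun y => ?_)
  simp only [Pi.add_apply, ← gaussianKernel_eq_zero_sub, ← smul_add, sub_add_cancel]

theorem integral_gaussianKernel_smul_self (hA : A.PosDef) (m : n → ℝ) :
    ∫ y, gaussianKernel A m y • y = (∫ y, gaussianKernel A m y) • m := by
  set I := ∫ y, gaussianKernel A m y • y
  have hreflect : I = (∫ y, gaussianKernel A m y) • (2 • m) - I := by
    calc I = ∫ y, gaussianKernel A m (2 • m - y) • (2 • m - y) :=
          (integral_sub_left_eq_self (fun y => gaussianKernel A m y • y) volume (2 • m)).symm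
      _ = ∫ y, (gaussianKernel A m y • (2 • m) - gaussianKernel A m y • y) := by
          simp only [gaussianKernel_two_nsmul_sub, smul_sub]
      _ = _ := by
          rw [integral_sub ((integrable_gaussianKernel hA m).smul_const _)
            (integrable_gaussianKernel_smul_self hA m), integral_smul_const]
  linear_combination (norm := module) (1 / 2 : ℝ) • hreflect

theorem exists_exp_neg_mul_gaussianKernel_eq {p : Type*} [Fintype p] {S : Matrix n n ℝ}
    {K : Matrix p n ℝ} (hS : S.IsSymm) (u : p → ℝ) (α m : n → ℝ)
    (hm : (S + (2 : ℝ) • (Kᵀ * K)) *ᵥ m = S *ᵥ α + (2 : ℝ) • Kᵀ *ᵥ u) :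
    ∃ c : ℝ, ∀ y, Real.exp (-((u - K *ᵥ y) ⬝ᵥ (u - K *ᵥ y))) * gaussianKernel S α y =
      c * gaussianKernel (S + (2 : ℝ) • (Kᵀ * K)) m y := by
  have hKK : (Kᵀ * K).IsSymm := transpose_mul _ _
  have hA : (S + (2 : ℝ) • (Kᵀ * K)).IsSymm := hS.add (hKK.smul 2)
  refine ⟨Real.exp (-(u ⬝ᵥ u) - (1 / 2) * (α ⬝ᵥ S *ᵥ α) +
    (1 / 2) * (m ⬝ᵥ (S *ᵥ α + (2 : ℝ) • Kᵀ *ᵥ u))), fun y => ?_⟩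
  simp only [gaussianKernel, ← Real.exp_add]
  congr 1
  rw [hA.dotProduct_sub_mulVec_sub hm, hS.dotProduct_sub_mulVec_sub rfl]
  simp only [add_mulVec, smul_mulVec, ← mulVec_mulVec, dotProduct_add, dotProduct_smul,
    dotProduct_sub, sub_dotProduct, dotProduct_mulVec _ Kᵀ, vecMul_transpose, smul_eq_mul]
  rw [dotProduct_comm (K *ᵥ y) u]
  ring

end gaussianKernel

/-- For a nondegenerate Gaussian `μ = N(α, Σ)` on `ℝ^d` (written through its unnormalized
density `g`), the L2 self-attention velocity field satisfies
`Γ_μ(x) = ∫ Vy e^{−‖Qx−Ky‖²} dμ(y) / ∫ e^{−‖Qx−Ky‖²} dμ(y)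
        = V (Σ⁻¹ + 2KᵀK)⁻¹ (Σ⁻¹α + 2KᵀQ x)`,
stated as: numerator = denominator • (closed form). -/
theorem stmt_11 (d : ℕ) (Q K V : Matrix (Fin d) (Fin d) ℝ)
    (α : Fin d → ℝ) (S : Matrix (Fin d) (Fin d) ℝ) (hS : S.PosDef)
    (g : (Fin d → ℝ) → ℝ)
    (hg : ∀ y, g y = Real.exp (-(1 / 2 : ℝ) * ((y - α) ⬝ᵥ S⁻¹.mulVec (y - α)))) :
    ∀ x : Fin d → ℝ,
      (∫ y : Fin d → ℝ,
          (Real.exp (-((Q.mulVec x - K.mulVec y) ⬝ᵥ (Q.mulVec x - K.mulVec y))) * g y) •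
            V.mulVec y) =
        (∫ y : Fin d → ℝ,
            Real.exp (-((Q.mulVec x - K.mulVec y) ⬝ᵥ (Q.mulVec x - K.mulVec y))) * g y) •
          V.mulVec ((S⁻¹ + (2 : ℝ) • (Kᵀ * K))⁻¹.mulVec
            (S⁻¹.mulVec α + (2 : ℝ) • (Kᵀ * Q).mulVec x)) := by
  intro x
  set A := S⁻¹ + (2 : ℝ) • (Kᵀ * K)
  set m := A⁻¹ *ᵥ (S⁻¹ *ᵥ α + (2 : ℝ) • (Kᵀ * Q) *ᵥ x)
  have hA : A.PosDef :=
    hS.inv.add_posSemidef ((posSemidef_conjTranspose_mul_self K).smul zero_le_two)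
  have hm : A *ᵥ m = S⁻¹ *ᵥ α + (2 : ℝ) • Kᵀ *ᵥ (Q *ᵥ x) := by
    rw [mulVec_mulVec, mul_nonsing_inv _ hA.det_pos.ne'.isUnit, one_mulVec, mulVec_mulVec]
  obtain ⟨c, hc⟩ := exists_exp_neg_mul_gaussianKernel_eq
    (isHermitian_iff_isSymm.1 hS.inv.isHermitian) (Q *ᵥ x) α m hm
  have hweight : ∀ y, Real.exp (-((Q *ᵥ x - K *ᵥ y) ⬝ᵥ (Q *ᵥ x - K *ᵥ y))) * g y =
      c * gaussianKernel A m y := fun y => by rw [hg]; exact hc y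
  let L : (Fin d → ℝ) →L[ℝ] (Fin d → ℝ) := LinearMap.toContinuousLinearMap (mulVecLin V)
  calc ∫ y, (Real.exp (-((Q *ᵥ x - K *ᵥ y) ⬝ᵥ (Q *ᵥ x - K *ᵥ y))) * g y) • V *ᵥ y
      = c • ∫ y, L (gaussianKernel A m y • y) := by
        rw [← integral_smul]
        refine integral_congr_ae (.of_forall fun y => ?_)
        dsimp only
        rw [hweight, mul_smul, ← mulVec_smul]
        rfl
    _ = c • V *ᵥ ((∫ y, gaussianKernel A m y) • m) := by
        rw [L.integral_comp_comm (integrable_gaussianKernel_smul_self hA m),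
          integral_gaussianKernel_smul_self hA m]
        rfl
    _ = _ := by
        simp only [hweight, integral_const_mul, mulVec_smul, smul_smul]
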